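/- arXiv:1401.0780 — 2 statements merged into one kernel-verified Lean document; each statement's English description precedes it below -/
import Mathlib

section
/- Suppose G_1, G_2, … are i.i.d. standard Gaussian random variables and {α_{jk} : j,k ≥ 1} are deterministic real numbers such that the quadratic forms ∑_{j,k=1}^{2n} α_{jk} G_j G_k converge in probability, as n → ∞, to some finite real random variable Z. If α_{11} ≠ 0, then Z has a continuous distribution, i.e., P(Z = z) = 0 for every z ∈ ℝ. -/
/-!
Write `S_n` for the quadratic form. Conditionally on `G_j` for `j ≠ 1`, `S_n` is a quadratic
`a x² + b x + c` in `x = G_1` with `a = α₁₁ ≠ 0`, and by completing the square such a quadratic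
lies within `ε` of a given `z` only on a set of Lebesgue measure at most `4 √(ε / |a|)`. As the
standard Gaussian density is bounded by `1`, independence gives `P(|S_n - z| ≤ ε) ≤ 4 √(ε / |a|)`
uniformly in `n ≥ 1`. Convergence in probability transfers this bound to `P(Z = z)`, and `ε → 0`.
-/

open MeasureTheory ProbabilityTheory Filter Real

theorem sq_sub_le_abs_sq_sub_sq {p q : ℝ} (hp : 0 ≤ p) (hq : 0 ≤ q) :
    (p - q) ^ 2 ≤ |p ^ 2 - q ^ 2| := by
  rcases le_total q p with h | h
  · rw [abs_of_nonneg (by nlinarith)]; nlinarith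
  · rw [abs_of_nonpos (by nlinarith)]; nlinarith

theorem volume_setOf_abs_sq_sub_le (w δ : ℝ) :
    volume {y : ℝ | |y ^ 2 - w| ≤ δ} ≤ ENNReal.ofReal (4 * √δ) := by
  -- `√w = 0` for `w < 0`, which is also the right centre in that case.
  set r := √w
  have hsq : ∀ y : ℝ, |y ^ 2 - w| ≤ δ → (|y| - r) ^ 2 ≤ δ := by
    intro y hy
    rcases le_or_gt 0 w with hw | hw
    · calc (|y| - r) ^ 2 ≤ |(|y| ^ 2 - r ^ 2)| :=
            sq_sub_le_abs_sq_sub_sq (abs_nonneg y) (sqrt_nonneg w)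
        _ ≤ δ := by rwa [sq_abs, sq_sqrt hw]
    · rw [show r = 0 from sqrt_eq_zero_of_nonpos hw.le, sub_zero, sq_abs]
      linarith [le_abs_self (y ^ 2 - w)]
  calc volume {y : ℝ | |y ^ 2 - w| ≤ δ}
      ≤ volume (Set.Icc (r - √δ) (r + √δ) ∪ Set.Icc (-r - √δ) (-r + √δ)) := by
        refine measure_mono fun y hy => ?_
        have h := abs_le.mp (abs_le_sqrt (hsq y hy))
        rcases abs_cases y with ⟨hy', _⟩ | ⟨hy', _⟩
        · exact Or.inl ⟨by linarith, by linarith⟩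
        · exact Or.inr ⟨by linarith, by linarith⟩
    _ ≤ volume (Set.Icc (r - √δ) (r + √δ)) + volume (Set.Icc (-r - √δ) (-r + √δ)) :=
        measure_union_le _ _
    _ = ENNReal.ofReal (4 * √δ) := by
        rw [volume_Icc, volume_Icc, ← ENNReal.ofReal_add (by linarith [sqrt_nonneg δ])
          (by linarith [sqrt_nonneg δ])]
        ring_nf

theorem volume_setOf_abs_quadratic_le {a : ℝ} (ha : a ≠ 0) (b c ε : ℝ) :
    volume {x : ℝ | |a * x ^ 2 + b * x + c| ≤ ε} ≤ ENNReal.ofReal (4 * √(ε / |a|)) := by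
  set m := b / (2 * a)
  set w := (b ^ 2 - 4 * a * c) / (4 * a ^ 2)
  have hsub : {x : ℝ | |a * x ^ 2 + b * x + c| ≤ ε}
      ⊆ (· + m) ⁻¹' {y : ℝ | |y ^ 2 - w| ≤ ε / |a|} := by
    intro x hx
    have hcomplete : a * x ^ 2 + b * x + c = a * ((x + m) ^ 2 - w) := by
      simp only [m, w]; field_simp; ring
    show |(x + m) ^ 2 - w| ≤ ε / |a|
    rw [le_div_iff₀ (abs_pos.mpr ha), mul_comm, ← abs_mul, ← hcomplete]
    exact hx
  calc volume {x : ℝ | |a * x ^ 2 + b * x + c| ≤ ε}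
      ≤ volume ((· + m) ⁻¹' {y : ℝ | |y ^ 2 - w| ≤ ε / |a|}) := measure_mono hsub
    _ = volume {y : ℝ | |y ^ 2 - w| ≤ ε / |a|} := measure_preimage_add_right _ _ _
    _ ≤ ENNReal.ofReal (4 * √(ε / |a|)) := volume_setOf_abs_sq_sub_le _ _

theorem gaussianReal_apply_le_volume (m : ℝ) (s : Set ℝ) :
    gaussianReal m 1 s ≤ volume s := by
  rw [gaussianReal_of_var_ne_zero _ one_ne_zero, withDensity_apply']
  calc ∫⁻ x in s, gaussianPDF m 1 x ≤ ∫⁻ _ in s, 1 := lintegral_mono fun x => ?_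
    _ = volume s := setLIntegral_one s
  rw [gaussianPDF, ENNReal.ofReal_le_one, gaussianPDFReal]
  have hpi : 1 ≤ √(2 * π * (1 : NNReal)) := by
    rw [NNReal.coe_one, mul_one, one_le_sqrt]; linarith [pi_gt_three]
  calc (√(2 * π * (1 : NNReal)))⁻¹ * rexp (-(x - m) ^ 2 / (2 * (1 : NNReal)))
      ≤ 1 * 1 := by
        gcongr
        · exact inv_le_one_of_one_le₀ hpi
        · rw [exp_le_one_iff]; simp only [NNReal.coe_one]; nlinarith [sq_nonneg (x - m)]
    _ = 1 := one_mul 1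

def quadForm {ι : Type*} (α : ι → ι → ℝ) (s : Finset ι) (x : ι → ℝ) : ℝ :=
  ∑ j ∈ s, ∑ k ∈ s, α j k * (x j * x k)

theorem quadForm_insert {ι : Type*} [DecidableEq ι] (α : ι → ι → ℝ) {s : Finset ι} {i : ι}
    (hi : i ∉ s) (x : ι → ℝ) :
    quadForm α (insert i s) x
      = α i i * x i ^ 2 + (∑ k ∈ s, (α i k + α k i) * x k) * x i + quadForm α s x := by
  simp only [quadForm, Finset.sum_insert hi, Finset.sum_add_distrib, Finset.sum_mul]
  ring_nf
  rw [Finset.sum_add_distrib]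
  ring

theorem ProbabilityTheory.IndepFun.measure_preimage_prodMk_le {Ω α β : Type*} [MeasurableSpace Ω]
    [MeasurableSpace α] [MeasurableSpace β] {P : Measure Ω} [IsProbabilityMeasure P]
    {X : Ω → α} {Y : Ω → β} (hX : Measurable X) (hY : Measurable Y) (hXY : IndepFun Y X P)
    {s : Set (β × α)} (hs : MeasurableSet s) {c : ENNReal}
    (hc : ∀ y, P.map X (Prod.mk y ⁻¹' s) ≤ c) :
    P ((fun ω => (Y ω, X ω)) ⁻¹' s) ≤ c := by
  have : IsProbabilityMeasure (P.map Y) := Measure.isProbabilityMeasure_map hY.aemeasurable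
  rw [← Measure.map_apply (hY.prodMk hX) hs,
    hXY.map_prod_eq_prod_map_map hY.aemeasurable hX.aemeasurable, Measure.prod_apply hs]
  calc ∫⁻ y, P.map X (Prod.mk y ⁻¹' s) ∂(P.map Y) ≤ ∫⁻ _, c ∂(P.map Y) := lintegral_mono hc
    _ = c := by simp

theorem MeasureTheory.TendstoInMeasure.measure_setOf_eq_le {Ω ι E : Type*} [MeasurableSpace Ω]
    {μ : Measure Ω} [PseudoMetricSpace E] {f : ι → Ω → E} {g : Ω → E} {l : Filter ι} [l.NeBot]
    (h : TendstoInMeasure μ f l g) (z : E) {ε : ℝ} (hε : 0 < ε) {c : ENNReal}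
    (hc : ∀ᶠ i in l, μ {x | dist (f i x) z ≤ ε} ≤ c) :
    μ {x | g x = z} ≤ c := by
  have hfar := (tendstoInMeasure_iff_dist.mp h ε hε).add_const c
  rw [zero_add] at hfar
  refine ge_of_tendsto hfar (hc.mono fun i hi => ?_)
  calc μ {x | g x = z}
      ≤ μ ({x | ε ≤ dist (f i x) (g x)} ∪ {x | dist (f i x) z ≤ ε}) := by
        refine measure_mono fun x hx => ?_
        by_cases hfar : ε ≤ dist (f i x) (g x)
        · exact Or.inl hfar
        · right
          show dist (f i x) z ≤ ε
          rw [← show g x = z from hx]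
          exact (not_le.mp hfar).le
    _ ≤ _ := (measure_union_le _ _).trans (add_le_add_right hi _)

theorem measure_abs_quadForm_sub_le {Ω ι : Type*} [MeasurableSpace Ω] {P : Measure Ω}
    [DecidableEq ι] {G : ι → Ω → ℝ} (hGmeas : ∀ j, Measurable (G j)) (hindep : iIndepFun G P)
    {i : ι} (hGi : P.map (G i) = gaussianReal 0 1) {α : ι → ι → ℝ} (hα : α i i ≠ 0)
    {s : Finset ι} (hi : i ∈ s) (z ε : ℝ) :
    P {ω | |quadForm α s (G · ω) - z| ≤ ε} ≤ ENNReal.ofReal (4 * √(ε / |α i i|)) := by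
  have := hindep.isProbabilityMeasure
  set T := s.erase i
  set Y : Ω → T → ℝ := fun ω k => G k ω
  set b : (T → ℝ) → ℝ := fun v => ∑ k : T, (α i k + α k i) * v k
  set c : (T → ℝ) → ℝ := fun v => ∑ j : T, ∑ k : T, α j k * (v j * v k)
  have hsplit : ∀ ω, quadForm α s (G · ω) = α i i * G i ω ^ 2 + b (Y ω) * G i ω + c (Y ω) := by
    intro ω
    rw [← Finset.insert_erase hi, quadForm_insert α (Finset.notMem_erase i s)]
    have hb : ∑ k ∈ T, (α i k + α k i) * G k ω = b (Y ω) := (Finset.sum_coe_sort T _).symm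
    have hc : quadForm α T (G · ω) = c (Y ω) :=
      calc quadForm α T (G · ω) = ∑ j : T, ∑ k ∈ T, α j k * (G j ω * G k ω) :=
            (Finset.sum_coe_sort T _).symm
        _ = c (Y ω) := Finset.sum_congr rfl fun j _ => (Finset.sum_coe_sort T _).symm
    rw [hb, hc]
  have hY : Measurable Y := measurable_pi_lambda _ fun k => hGmeas k
  have hdisj : Disjoint T {i} := Finset.disjoint_singleton_right.mpr (Finset.notMem_erase i s)
  have hindepYX : IndepFun Y (G i) P :=
    (hindep.indepFun_finset T {i} hdisj hGmeas).comp measurable_id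
      (measurable_pi_apply (⟨i, Finset.mem_singleton_self i⟩ : ({i} : Finset ι)))
  have hs : MeasurableSet {p : (T → ℝ) × ℝ | |α i i * p.2 ^ 2 + b p.1 * p.2 + c p.1 - z| ≤ ε} :=
    measurableSet_le (by fun_prop) measurable_const
  calc P {ω | |quadForm α s (G · ω) - z| ≤ ε}
      = P ((fun ω => (Y ω, G i ω)) ⁻¹'
          {p | |α i i * p.2 ^ 2 + b p.1 * p.2 + c p.1 - z| ≤ ε}) := by
        simp only [hsplit]; rfl
    _ ≤ ENNReal.ofReal (4 * √(ε / |α i i|)) := by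
        refine hindepYX.measure_preimage_prodMk_le (hGmeas i) hY hs fun v => ?_
        rw [hGi]
        calc gaussianReal 0 1 (Prod.mk v ⁻¹' _)
            = gaussianReal 0 1 {x | |α i i * x ^ 2 + b v * x + (c v - z)| ≤ ε} := by
              simp only [Set.preimage_ofPred_eq, add_sub_assoc]
          _ ≤ volume {x | |α i i * x ^ 2 + b v * x + (c v - z)| ≤ ε} :=
              gaussianReal_apply_le_volume 0 _
          _ ≤ ENNReal.ofReal (4 * √(ε / |α i i|)) := volume_setOf_abs_quadratic_le hα _ _ _

theorem statement14_general {Ω : Type} [MeasurableSpace Ω] (P : Measure Ω)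
    (G : ℕ → Ω → ℝ)
    (hGmeas : ∀ j, Measurable (G j))
    (hGindep : iIndepFun G P)
    (hGgauss : ∀ j, P.map (G j) = gaussianReal 0 1)
    (α : ℕ → ℕ → ℝ) (Z : Ω → ℝ) (hα : α 1 1 ≠ 0)
    (hconv : ∀ ε > 0, Tendsto (fun n => P {ω | ε ≤
      |(∑ j ∈ Finset.Icc 1 (2 * n), ∑ k ∈ Finset.Icc 1 (2 * n),
        α j k * (G j ω * G k ω)) - Z ω|}) atTop (nhds 0)) :
    ∀ z : ℝ, P {ω | Z ω = z} = 0 := by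
  intro z
  have hZ : TendstoInMeasure P (fun n ω => quadForm α (Finset.Icc 1 (2 * n)) (G · ω)) atTop Z :=
    tendstoInMeasure_iff_dist.mpr fun ε hε => by
      simpa only [Real.dist_eq, quadForm] using hconv ε hε
  have hatom : ∀ ε > 0, P {ω | Z ω = z} ≤ ENNReal.ofReal (4 * √(ε / |α 1 1|)) := by
    intro ε hε
    refine hZ.measure_setOf_eq_le z hε ((eventually_ge_atTop 1).mono fun n hn => ?_)
    simpa only [Real.dist_eq] using measure_abs_quadForm_sub_le hGmeas hGindep (hGgauss 1) hα
      (Finset.mem_Icc.mpr ⟨le_rfl, by omega⟩) z ε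
  have hbound : Tendsto (fun ε => ENNReal.ofReal (4 * √(ε / |α 1 1|)))
      (nhdsWithin 0 (Set.Ioi 0)) (nhds 0) := by
    have hcont : Continuous fun ε : ℝ => ENNReal.ofReal (4 * √(ε / |α 1 1|)) :=
      ENNReal.continuous_ofReal.comp (by fun_prop)
    have h0 : ENNReal.ofReal (4 * √(0 / |α 1 1|)) = 0 := by simp
    exact h0 ▸ (hcont.tendsto 0).mono_left nhdsWithin_le_nhds
  exact le_antisymm (ge_of_tendsto hbound (eventually_nhdsWithin_of_forall hatom)) zero_le

/-- **Lemma 3.9.** If quadratic forms `∑_{j,k=1}^{2n} α_{jk} G_j G_k` in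
i.i.d. standard Gaussians converge in probability to `Z` and `α_{11} ≠ 0`,
then `Z` has a continuous distribution. -/
theorem statement14 {Ω : Type} [MeasurableSpace Ω] (P : Measure Ω)
    [IsProbabilityMeasure P] (G : ℕ → Ω → ℝ)
    (hGmeas : ∀ j, Measurable (G j))
    (hGindep : iIndepFun G P)
    (hGgauss : ∀ j, P.map (G j) = gaussianReal 0 1)
    (α : ℕ → ℕ → ℝ) (Z : Ω → ℝ) (hα : α 1 1 ≠ 0)
    (hconv : ∀ ε > 0, Tendsto (fun n => P {ω | ε ≤
      |(∑ j ∈ Finset.Icc 1 (2 * n), ∑ k ∈ Finset.Icc 1 (2 * n),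
        α j k * (G j ω * G k ω)) - Z ω|}) atTop (nhds 0)) :
    ∀ z : ℝ, P {ω | Z ω = z} = 0 :=
  statement14_general P G hGmeas hGindep hGgauss α Z hα hconv
end

section
/- For all x,y ∈ ℝ, the limits lim_{N→∞} (1/N) ∑_{k=1}^N sin(kx) sin(ky), lim_{N→∞} (1/N) ∑_{k=1}^N sin(kx) cos(ky), and lim_{N→∞} (1/N) ∑_{k=1}^N cos(kx) cos(ky) all exist. Furthermore, for all x,y ∈ ℝ, the limit lim_{N→∞} N^{−2} ∑_{i,j=1}^N [cos(ix + jy) + cos(iy + jx)]² exists and is strictly positive. -/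
/-!
For `z = exp (θ i)` on the unit circle the partial sums `∑_{k=1}^N z ^ k` are bounded unless
`z = 1`, so the Cesàro means of `cos (k θ)` and `sin (k θ)` converge (to `0` or `1`, resp. to
`0`); the product-to-sum formulas reduce the three averages of products to these. The summand
`cos (i a + j b) = cos (i a) cos (j b) - sin (i a) sin (j b)` separates the variables, so its
double mean tends to the product of single limits. Expanding
`(cos u + cos v) ^ 2 = 1 + cos (2u) / 2 + cos (2v) / 2 + cos (u + v) + cos (u - v)` writes the
square as `1` plus such terms, whose limits are nonnegative; hence the limit is at least `1`.
-/

open Filter Topology Finset Real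

noncomputable section

def cesaroMean (f : ℕ → ℝ) (N : ℕ) : ℝ :=
  (N : ℝ)⁻¹ * ∑ k ∈ Icc 1 N, f k

def cesaroMean₂ (f : ℕ → ℕ → ℝ) (N : ℕ) : ℝ :=
  ((N : ℝ) ^ 2)⁻¹ * ∑ i ∈ Icc 1 N, ∑ j ∈ Icc 1 N, f i j

theorem norm_sum_Icc_pow_le {𝕜 : Type*} [NormedDivisionRing 𝕜] {z : 𝕜} (hz : ‖z‖ ≤ 1)
    (hz1 : z ≠ 1) (N : ℕ) : ‖∑ k ∈ Icc 1 N, z ^ k‖ ≤ 2 / ‖z - 1‖ := by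
  rw [← Ico_add_one_right_eq_Icc, geom_sum_Ico hz1 (by omega), norm_div]
  gcongr
  calc ‖z ^ (N + 1) - z ^ 1‖ ≤ ‖z ^ (N + 1)‖ + ‖z ^ 1‖ := norm_sub_le _ _
    _ ≤ 1 + 1 := by
        rw [norm_pow, norm_pow]
        gcongr <;> exact pow_le_one₀ (norm_nonneg z) hz
    _ = 2 := one_add_one_eq_two

theorem tendsto_inv_mul_sum_Icc_pow {𝕜 : Type*} [RCLike 𝕜] {z : 𝕜} (hz : ‖z‖ ≤ 1) :
    Tendsto (fun N : ℕ => (N : 𝕜)⁻¹ * ∑ k ∈ Icc 1 N, z ^ k) atTop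
      (𝓝 (if z = 1 then 1 else 0)) := by
  split_ifs with hz1
  · refine tendsto_const_nhds.congr' ?_
    filter_upwards [eventually_ne_atTop 0] with N hN
    simp [hz1, hN]
  · refine squeeze_zero_norm (fun N => ?_)
      (tendsto_const_div_atTop_nhds_zero_nat (2 / ‖z - 1‖))
    rw [norm_mul, norm_inv, RCLike.norm_natCast, div_eq_inv_mul]
    gcongr
    exact norm_sum_Icc_pow_le hz hz1 N

def cosMeanLimit (θ : ℝ) : ℝ := if Complex.exp (θ * Complex.I) = 1 then 1 else 0

theorem cosMeanLimit_nonneg (θ : ℝ) : 0 ≤ cosMeanLimit θ := by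
  unfold cosMeanLimit; split_ifs <;> norm_num

theorem cexp_mul_I_pow (θ : ℝ) (k : ℕ) :
    Complex.exp (θ * Complex.I) ^ k = cos (k * θ) + sin (k * θ) * Complex.I := by
  rw [← Complex.exp_nat_mul, ← mul_assoc, ← Complex.ofReal_natCast, ← Complex.ofReal_mul,
    Complex.exp_mul_I, ← Complex.ofReal_cos, ← Complex.ofReal_sin]

theorem inv_mul_sum_Icc_cexp_pow (θ : ℝ) (N : ℕ) :
    (N : ℂ)⁻¹ * ∑ k ∈ Icc 1 N, Complex.exp (θ * Complex.I) ^ k =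
      cesaroMean (fun k => cos (k * θ)) N +
        cesaroMean (fun k => sin (k * θ)) N * Complex.I := by
  simp only [cexp_mul_I_pow, cesaroMean, sum_add_distrib, ← sum_mul]
  push_cast
  ring

theorem tendsto_cesaroMean_cos_sin (θ : ℝ) :
    Tendsto (cesaroMean fun k => cos (k * θ)) atTop (𝓝 (cosMeanLimit θ)) ∧
      Tendsto (cesaroMean fun k => sin (k * θ)) atTop (𝓝 0) := by
  have h := tendsto_inv_mul_sum_Icc_pow (z := Complex.exp (θ * Complex.I))
    (Complex.norm_exp_ofReal_mul_I θ).le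
  simp only [inv_mul_sum_Icc_cexp_pow] at h
  constructor
  · convert (Complex.continuous_re.tendsto _).comp h using 1
    · funext N; simp
    · unfold cosMeanLimit; split_ifs <;> simp
  · convert (Complex.continuous_im.tendsto _).comp h using 1
    · funext N; simp
    · split_ifs <;> simp

theorem exists_tendsto_cesaroMean_of_eq_add {f g h : ℕ → ℝ} {a b α β : ℝ}
    (hf : ∀ k, f k = a * g k + b * h k) (hg : Tendsto (cesaroMean g) atTop (𝓝 α))
    (hh : Tendsto (cesaroMean h) atTop (𝓝 β)) :
    ∃ L, Tendsto (cesaroMean f) atTop (𝓝 L) := by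
  have hmean : ∀ N, cesaroMean f N = a * cesaroMean g N + b * cesaroMean h N := fun N => by
    simp only [cesaroMean, hf, sum_add_distrib, ← mul_sum]
    ring
  exact ⟨_, ((hg.const_mul a).add (hh.const_mul b)).congr fun N => (hmean N).symm⟩

section

variable (f g : ℕ → ℕ → ℝ) (c : ℝ) (N : ℕ)

theorem cesaroMean₂_add :
    cesaroMean₂ (fun i j => f i j + g i j) N = cesaroMean₂ f N + cesaroMean₂ g N := by
  simp only [cesaroMean₂, sum_add_distrib, mul_add]

theorem cesaroMean₂_sub :
    cesaroMean₂ (fun i j => f i j - g i j) N = cesaroMean₂ f N - cesaroMean₂ g N := by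
  simp only [cesaroMean₂, sum_sub_distrib, mul_sub]

theorem cesaroMean₂_const_mul :
    cesaroMean₂ (fun i j => c * f i j) N = c * cesaroMean₂ f N := by
  simp only [cesaroMean₂, ← mul_sum]
  ring

end

theorem cesaroMean₂_mul (f g : ℕ → ℝ) (N : ℕ) :
    cesaroMean₂ (fun i j => f i * g j) N = cesaroMean f N * cesaroMean g N := by
  simp only [cesaroMean₂, cesaroMean, ← sum_mul_sum]
  ring

theorem tendsto_cesaroMean₂_one : Tendsto (cesaroMean₂ fun _ _ => 1) atTop (𝓝 1) := by
  refine tendsto_const_nhds.congr' ?_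
  filter_upwards [eventually_ne_atTop 0] with N hN
  simp only [cesaroMean₂, sum_const, Nat.card_Icc, add_tsub_cancel_right, nsmul_eq_mul, mul_one]
  field_simp

theorem tendsto_cesaroMean₂_cos_add (a b : ℝ) :
    Tendsto (cesaroMean₂ fun i j => cos (i * a + j * b)) atTop
      (𝓝 (cosMeanLimit a * cosMeanLimit b)) := by
  obtain ⟨hca, hsa⟩ := tendsto_cesaroMean_cos_sin a
  obtain ⟨hcb, hsb⟩ := tendsto_cesaroMean_cos_sin b
  have h := (hca.mul hcb).sub (hsa.mul hsb)
  rw [mul_zero, sub_zero] at h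
  refine h.congr fun N => ?_
  simp only [cos_add, cesaroMean₂_sub, cesaroMean₂_mul]

theorem sq_cos_add_cos (u v : ℝ) :
    (cos u + cos v) ^ 2 =
      1 + 1 / 2 * cos (2 * u) + 1 / 2 * cos (2 * v) + cos (u + v) + cos (u - v) := by
  rw [cos_two_mul, cos_two_mul, cos_add, cos_sub]
  ring

theorem exists_one_le_tendsto_cesaroMean₂ (x y : ℝ) :
    ∃ L, 1 ≤ L ∧ Tendsto (cesaroMean₂ fun i j =>
      (cos (i * x + j * y) + cos (i * y + j * x)) ^ 2) atTop (𝓝 L) := by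
  have hexpand : (fun i j : ℕ => (cos (i * x + j * y) + cos (i * y + j * x)) ^ 2) =
      fun i j : ℕ => 1 + 1 / 2 * cos (i * (2 * x) + j * (2 * y)) +
        1 / 2 * cos (i * (2 * y) + j * (2 * x)) + cos (i * (x + y) + j * (x + y)) +
        cos (i * (x - y) + j * (y - x)) := by
    funext i j
    rw [sq_cos_add_cos]
    ring_nf
  have hA := tendsto_cesaroMean₂_cos_add
  have hlim := (((tendsto_cesaroMean₂_one.add ((hA (2 * x) (2 * y)).const_mul (1 / 2))).add
    ((hA (2 * y) (2 * x)).const_mul (1 / 2))).add (hA (x + y) (x + y))).add (hA (x - y) (y - x))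
  refine ⟨_, ?_, hlim.congr fun N => ?_⟩
  · have h := cosMeanLimit_nonneg
    linarith [mul_nonneg (h (2 * x)) (h (2 * y)), mul_nonneg (h (2 * y)) (h (2 * x)),
      mul_nonneg (h (x + y)) (h (x + y)), mul_nonneg (h (x - y)) (h (y - x))]
  · rw [hexpand]
    simp only [cesaroMean₂_add, cesaroMean₂_const_mul]

/-- **Fact 3.10.** The Cesàro averages of products of sines and cosines
converge, and the limit in the displayed quadratic expression exists and is
strictly positive. -/
theorem statement15 :
    (∀ x y : ℝ,
      (∃ L : ℝ, Tendsto (fun N : ℕ =>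
        (N : ℝ)⁻¹ * ∑ k ∈ Finset.Icc 1 N, Real.sin (k * x) * Real.sin (k * y))
        atTop (nhds L)) ∧
      (∃ L : ℝ, Tendsto (fun N : ℕ =>
        (N : ℝ)⁻¹ * ∑ k ∈ Finset.Icc 1 N, Real.sin (k * x) * Real.cos (k * y))
        atTop (nhds L)) ∧
      (∃ L : ℝ, Tendsto (fun N : ℕ =>
        (N : ℝ)⁻¹ * ∑ k ∈ Finset.Icc 1 N, Real.cos (k * x) * Real.cos (k * y))
        atTop (nhds L))) ∧
    ∀ x y : ℝ, ∃ L : ℝ, 0 < L ∧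
      Tendsto (fun N : ℕ =>
        ((N : ℝ) ^ 2)⁻¹ * ∑ i ∈ Finset.Icc 1 N, ∑ j ∈ Finset.Icc 1 N,
          (Real.cos (i * x + j * y) + Real.cos (i * y + j * x)) ^ 2)
        atTop (nhds L) := by
  refine ⟨fun x y => ⟨?_, ?_, ?_⟩, fun x y => ?_⟩
  · refine exists_tendsto_cesaroMean_of_eq_add (a := 1 / 2) (b := -1 / 2) (fun k => ?_)
      (tendsto_cesaroMean_cos_sin (x - y)).1 (tendsto_cesaroMean_cos_sin (x + y)).1
    rw [mul_sub, mul_add, cos_sub, cos_add]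
    ring
  · refine exists_tendsto_cesaroMean_of_eq_add (a := 1 / 2) (b := 1 / 2) (fun k => ?_)
      (tendsto_cesaroMean_cos_sin (x + y)).2 (tendsto_cesaroMean_cos_sin (x - y)).2
    rw [mul_sub, mul_add, sin_sub, sin_add]
    ring
  · refine exists_tendsto_cesaroMean_of_eq_add (a := 1 / 2) (b := 1 / 2) (fun k => ?_)
      (tendsto_cesaroMean_cos_sin (x - y)).1 (tendsto_cesaroMean_cos_sin (x + y)).1
    rw [mul_sub, mul_add, cos_sub, cos_add]
    ring
  · obtain ⟨L, hL, hlim⟩ := exists_one_le_tendsto_cesaroMean₂ x y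
    exact ⟨L, zero_lt_one.trans_le hL, hlim⟩

end
end
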